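/- Let q = (q_0, …, q_{n-1}) ∈ ℂ^n be a nonzero vector satisfying the lower system and suppose λ_{n-2}·q_0^k + q_1^k ≠ 0. Then the set of points [x_0 : … : x_n] of the generalized Fermat curve C^k(λ) ⊂ ℙ^n(ℂ) such that (x_0, …, x_{n-1}) is a nonzero scalar multiple of q has exactly k elements. (The covering π : C^k(λ) → C^k(λ') of degree k is unbranched over points off the branch locus.) -/
import Mathlib


noncomputable section

/-- A solution of the generalized Fermat system of type `(k,n)`:
`x₀^k + x₁^k + x₂^k = 0` and `λ_j·x₀^k + x₁^k + x_{j+2}^k = 0` for `j = 1, …, n-2`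
(here `lam` is 0-indexed, so `lam j` is `λ_{j+1}` and the last variable index is `j+3`). -/
def gfSol (k n : ℕ) (hn : 3 ≤ n) (lam : Fin (n - 2) → ℂ) (x : Fin (n + 1) → ℂ) : Prop :=
  x ⟨0, by omega⟩ ^ k + x ⟨1, by omega⟩ ^ k + x ⟨2, by omega⟩ ^ k = 0 ∧
    ∀ j : Fin (n - 2),
      lam j * x ⟨0, by omega⟩ ^ k + x ⟨1, by omega⟩ ^ k +
        x ⟨(j : ℕ) + 3, by have := j.2; omega⟩ ^ k = 0

/-- A solution of the lower system `P₁, …, P_{n-2}` (the equations not involving `x_n`). -/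
def gfSolLow (k n : ℕ) (hn : 3 ≤ n) (lam : Fin (n - 2) → ℂ) (y : Fin n → ℂ) : Prop :=
  y ⟨0, by omega⟩ ^ k + y ⟨1, by omega⟩ ^ k + y ⟨2, by omega⟩ ^ k = 0 ∧
    ∀ j : Fin (n - 2), ∀ h : (j : ℕ) + 3 < n,
      lam j * y ⟨0, by omega⟩ ^ k + y ⟨1, by omega⟩ ^ k + y ⟨(j : ℕ) + 3, h⟩ ^ k = 0

theorem generalized_fermat_unbranched_fiber_count (k n : ℕ) (hk : 2 ≤ k) (hn : 3 ≤ n)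
    (lam : Fin (n - 2) → ℂ) (hl0 : ∀ j, lam j ≠ 0) (hl1 : ∀ j, lam j ≠ 1)
    (hinj : Function.Injective lam)
    (q : Fin n → ℂ) (hq0 : q ≠ 0) (hq : gfSolLow k n hn lam q)
    (hbr : lam ⟨n - 3, by omega⟩ * q ⟨0, by omega⟩ ^ k + q ⟨1, by omega⟩ ^ k ≠ 0) :
    {p : Projectivization ℂ (Fin (n + 1) → ℂ) |
        ∃ (x : Fin (n + 1) → ℂ) (hx : x ≠ 0), gfSol k n hn lam x ∧
          (∃ c : ℂ, c ≠ 0 ∧ (fun i : Fin n => x i.castSucc) = c • q) ∧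
          p = Projectivization.mk ℂ x hx}.Finite ∧
      {p : Projectivization ℂ (Fin (n + 1) → ℂ) |
        ∃ (x : Fin (n + 1) → ℂ) (hx : x ≠ 0), gfSol k n hn lam x ∧
          (∃ c : ℂ, c ≠ 0 ∧ (fun i : Fin n => x i.castSucc) = c • q) ∧
          p = Projectivization.mk ℂ x hx}.ncard = k := by
  have hk0 : 0 < k := by omega
  set A : ℂ := -(lam ⟨n - 3, by omega⟩ * q ⟨0, by omega⟩ ^ k + q ⟨1, by omega⟩ ^ k) with hAdef
  have hA : A ≠ 0 := neg_ne_zero.mpr hbr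
  obtain ⟨i0, hi0⟩ : ∃ i, q i ≠ 0 := Function.ne_iff.mp hq0
  have hsnoc : ∀ w : ℂ, (Fin.snoc q w : Fin (n + 1) → ℂ) ≠ 0 := by
    intro w h
    apply hi0
    have := congrFun h (Fin.castSucc i0)
    rwa [Fin.snoc_castSucc, Pi.zero_apply] at this
  have hsn : ∀ (w : ℂ) (m : ℕ) (hm : m < n) (h' : m < n + 1),
      (Fin.snoc q w : Fin (n + 1) → ℂ) ⟨m, h'⟩ = q ⟨m, hm⟩ := by
    intro w m hm h'
    exact Fin.snoc_castSucc (α := fun _ => ℂ) (p := q) (x := w) (i := ⟨m, hm⟩)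
  have hsl : ∀ (w : ℂ) (m : ℕ) (hm : m = n) (h' : m < n + 1),
      (Fin.snoc q w : Fin (n + 1) → ℂ) ⟨m, h'⟩ = w := by
    intro w m hm h'; subst hm; exact Fin.snoc_last (α := fun _ => ℂ) (x := w) (p := q)
  set T : Set ℂ := {w : ℂ | w ^ k = A} with hTdef
  set f : ℂ → Projectivization ℂ (Fin (n + 1) → ℂ) :=
    fun w => Projectivization.mk ℂ (Fin.snoc q w) (hsnoc w) with hfdef
  have hST : {p : Projectivization ℂ (Fin (n + 1) → ℂ) |
        ∃ (x : Fin (n + 1) → ℂ) (hx : x ≠ 0), gfSol k n hn lam x ∧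
          (∃ c : ℂ, c ≠ 0 ∧ (fun i : Fin n => x i.castSucc) = c • q) ∧
          p = Projectivization.mk ℂ x hx} = f '' T := by
    ext p
    constructor
    · rintro ⟨x, hx, hsol, ⟨c, hc, hcq⟩, rfl⟩
      have hcoord : ∀ (m : ℕ) (hm : m < n) (h' : m < n + 1), x ⟨m, h'⟩ = c * q ⟨m, hm⟩ := by
        intro m hm h'
        have := congrFun hcq ⟨m, hm⟩
        simpa using this
      set w' := x (Fin.last n) with hw'def
      have hxl : ∀ (m : ℕ) (hm : m = n) (h' : m < n + 1), x ⟨m, h'⟩ = w' := by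
        intro m hm h'; subst hm; rfl
      have heq := hsol.2 ⟨n - 3, by omega⟩
      rw [hcoord 0 (by omega), hcoord 1 (by omega), hxl _ (by show n - 3 + 3 = n; omega)] at heq
      have hj : (⟨n - 3, by omega⟩ : Fin (n - 2)) = ⟨n - 3, by omega⟩ := rfl
      have h1 : w' ^ k = c ^ k * A := by rw [hAdef]; linear_combination heq
      have hwT : (w' / c) ^ k = A := by
        rw [div_pow, h1, mul_comm, mul_div_assoc, div_self (pow_ne_zero k hc), mul_one]
      have hxeq : x = c • (Fin.snoc q (w' / c) : Fin (n + 1) → ℂ) := by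
        funext i
        refine Fin.lastCases ?_ ?_ i
        · rw [Pi.smul_apply, Fin.snoc_last, smul_eq_mul, mul_div_cancel₀ _ hc]
        · intro i
          have := congrFun hcq i
          simpa [Fin.snoc_castSucc] using this
      refine ⟨w' / c, hwT, ?_⟩
      refine ((Projectivization.mk_eq_mk_iff ℂ x _ hx (hsnoc _)).2 ⟨Units.mk0 c hc, ?_⟩).symm
      rw [Units.smul_def]
      exact hxeq.symm
    · rintro ⟨w, hw, rfl⟩
      have hwk : w ^ k = A := hw
      refine ⟨Fin.snoc q w, hsnoc w, ?_, ⟨1, one_ne_zero, ?_⟩, rfl⟩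
      · constructor
        · rw [hsn w 0 (by omega), hsn w 1 (by omega), hsn w 2 (by omega)]
          exact hq.1
        · intro j
          by_cases hjn : (j : ℕ) + 3 < n
          · rw [hsn w 0 (by omega), hsn w 1 (by omega), hsn w _ hjn]
            exact hq.2 j hjn
          · have hjv : (j : ℕ) = n - 3 := by have := j.2; omega
            rw [hsn w 0 (by omega), hsn w 1 (by omega), hsl w _ (by omega), hwk, hAdef]
            have hjeq : j = ⟨n - 3, by omega⟩ := Fin.ext hjv
            rw [hjeq]
            ring
      · funext i
        simp [Fin.snoc_castSucc]
  have hfinj : Set.InjOn f T := by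
    intro w hw w' hw' h
    obtain ⟨a, ha⟩ := (Projectivization.mk_eq_mk_iff ℂ _ _ _ _).1 h
    have h1 := congrFun ha (Fin.castSucc i0)
    simp only [Pi.smul_apply, Fin.snoc_castSucc, Units.smul_def, smul_eq_mul] at h1
    have ha1 : (a : ℂ) = 1 := by
      have : (a : ℂ) * q i0 = 1 * q i0 := by rw [one_mul]; exact h1
      exact mul_right_cancel₀ hi0 this
    have h2 := congrFun ha (Fin.last n)
    simp only [Pi.smul_apply, Fin.snoc_last, Units.smul_def, smul_eq_mul, ha1, one_mul] at h2
    exact h2.symm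
  have hζ := Complex.isPrimitiveRoot_exp k (by omega)
  have hTeq : T = ↑(Polynomial.nthRoots k A).toFinset := by
    ext w
    simp [hTdef, Polynomial.mem_nthRoots hk0]
  have hTfin : T.Finite := hTeq ▸ (Polynomial.nthRoots k A).toFinset.finite_toSet
  have hTcard : T.ncard = k := by
    rw [hTeq, Set.ncard_coe_finset, Multiset.toFinset_card_of_nodup (hζ.nthRoots_nodup hA),
      hζ.card_nthRoots, if_pos (IsAlgClosed.exists_pow_nat_eq A hk0)]
  rw [hST]
  exact ⟨hTfin.image f, by rw [Set.ncard_image_of_injOn hfinj, hTcard]⟩
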